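/- Let a ∈ ℝ and let ω be a four-times continuously differentiable positive real function on an open interval I satisfying ω³·ω'''' + 4(a−1)·ω²·ω'·ω''' + 3(a−1)·ω²·(ω'')² + 6(a−1)(a−2)·ω·(ω')²·ω'' + (a−1)(a−2)(a−3)·(ω')⁴ = 0 on I. Then the function u = ω^a satisfies u'''' = 0 on I. (Thus the transformation t = x, u = ω^a maps the equation, which is the image of the third-order Riccati-hierarchy equation y''' + 4y·y'' + 3(y')² + 6y²·y' + 4y⁴ = 0 under the Riccati substitution y = a·ω'/ω, to the linear equation u'''' = 0.) -/

import Mathlib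

/-!
Every derivative of `u = ω ^ a` has the form `u⁽ᵏ⁾ = ω ^ (a - k) * Pₖ` with `Pₖ` a polynomial in
`ω, ω', …, ω⁽ᵏ⁾`, and differentiating gives `Pₖ₊₁ = (a - k) ω' Pₖ + ω Pₖ'`. Starting from
`P₀ = 1`, one finds that `P₄` is `a` times the left-hand side of the equation.
-/

open Set

section IteratedDeriv

variable {𝕜 : Type*} [NontriviallyNormedField 𝕜] {F : Type*} [NormedAddCommGroup F]
  [NormedSpace 𝕜 F] {s : Set 𝕜} {x : 𝕜}

theorem ContDiffOn.hasDerivAt_iteratedDeriv {f : 𝕜 → F} {n : WithTop ℕ∞} {k : ℕ}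
    (hf : ContDiffOn 𝕜 n f s) (hs : IsOpen s) (hk : k < n) (hx : x ∈ s) :
    HasDerivAt (iteratedDeriv k f) (iteratedDeriv (k + 1) f x) x := by
  have hd : DifferentiableOn 𝕜 (iteratedDeriv k f) s :=
    (hf.differentiableOn_iteratedDerivWithin hk hs.uniqueDiffOn).congr
      fun y hy => (iteratedDerivWithin_of_isOpen hs hy).symm
  rw [iteratedDeriv_succ]
  exact (hd.differentiableAt (hs.mem_nhds hx)).hasDerivAt

theorem ContDiffOn.hasDerivAt_of_isOpen {f : 𝕜 → F} {n : WithTop ℕ∞}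
    (hf : ContDiffOn 𝕜 n f s) (hs : IsOpen s) (hn : 1 ≤ n) (hx : x ∈ s) :
    HasDerivAt f (iteratedDeriv 1 f x) x := by
  simpa only [iteratedDeriv_zero, zero_add] using
    hf.hasDerivAt_iteratedDeriv hs (k := 0) (zero_lt_one.trans_le hn) hx

theorem iteratedDeriv_succ_eq_of_eqOn {f g : 𝕜 → F} {g' : F} {n : ℕ} (hs : IsOpen s)
    (hfg : EqOn (iteratedDeriv n f) g s) (hx : x ∈ s) (hg : HasDerivAt g g' x) :
    iteratedDeriv (n + 1) f x = g' := by
  rw [iteratedDeriv_succ, (hfg.eventuallyEq_of_mem (hs.mem_nhds hx)).deriv_eq, hg.deriv]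

end IteratedDeriv

theorem eqOn_iteratedDeriv_succ_of_eqOn_rpow_mul {u ω ω' P P' : ℝ → ℝ} {U : Set ℝ} {n : ℕ}
    {b : ℝ} (hU : IsOpen U) (hu : EqOn (iteratedDeriv n u) (fun x => ω x ^ b * P x) U)
    (hne : ∀ x ∈ U, ω x ≠ 0) (hω : ∀ x ∈ U, HasDerivAt ω (ω' x) x)
    (hP : ∀ x ∈ U, HasDerivAt P (P' x) x) :
    EqOn (iteratedDeriv (n + 1) u)
      (fun x => ω x ^ (b - 1) * (b * ω' x * P x + ω x * P' x)) U := by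
  intro x hx
  refine iteratedDeriv_succ_eq_of_eqOn hU hu hx ?_
  refine (((hω x hx).rpow_const (p := b) (Or.inl (hne x hx))).mul (hP x hx)).congr_deriv ?_
  have hsplit : ω x ^ b = ω x ^ (b - 1) * ω x := by
    rw [← Real.rpow_add_one (hne x hx), sub_add_cancel]
  rw [hsplit]
  ring

section RpowDerivatives

variable {ω : ℝ → ℝ} {U : Set ℝ} (a : ℝ)

theorem eqOn_iteratedDeriv_one_rpow (hU : IsOpen U) (hω : ContDiffOn ℝ 1 ω U)
    (hne : ∀ x ∈ U, ω x ≠ 0) :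
    EqOn (iteratedDeriv 1 (fun s => ω s ^ a))
      (fun x => ω x ^ (a - 1) * (a * iteratedDeriv 1 ω x)) U := by
  intro x hx
  rw [iteratedDeriv_one,
    ((hω.hasDerivAt_of_isOpen hU le_rfl hx).rpow_const (p := a) (Or.inl (hne x hx))).deriv]
  ring

theorem eqOn_iteratedDeriv_two_rpow (hU : IsOpen U) (hω : ContDiffOn ℝ 2 ω U)
    (hne : ∀ x ∈ U, ω x ≠ 0) :
    EqOn (iteratedDeriv 2 (fun s => ω s ^ a))
      (fun x => ω x ^ (a - 2) * (a * ((a - 1) * iteratedDeriv 1 ω x ^ 2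
        + ω x * iteratedDeriv 2 ω x))) U := by
  have hD₀ x (hx : x ∈ U) := hω.hasDerivAt_of_isOpen hU (by norm_num) hx
  have hD₁ x (hx : x ∈ U) := hω.hasDerivAt_iteratedDeriv hU (k := 1) (by norm_num) hx
  have hu := eqOn_iteratedDeriv_succ_of_eqOn_rpow_mul hU
    (eqOn_iteratedDeriv_one_rpow a hU (hω.of_le (by norm_num)) hne) hne hD₀
    (fun x hx => (hD₁ x hx).const_mul a)
  intro x hx
  rw [hu hx]
  ring_nf

theorem eqOn_iteratedDeriv_three_rpow (hU : IsOpen U) (hω : ContDiffOn ℝ 3 ω U)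
    (hne : ∀ x ∈ U, ω x ≠ 0) :
    EqOn (iteratedDeriv 3 (fun s => ω s ^ a))
      (fun x => ω x ^ (a - 3) * (a * ((a - 1) * (a - 2) * iteratedDeriv 1 ω x ^ 3
        + 3 * (a - 1) * ω x * iteratedDeriv 1 ω x * iteratedDeriv 2 ω x
        + ω x ^ 2 * iteratedDeriv 3 ω x))) U := by
  have hD₀ x (hx : x ∈ U) := hω.hasDerivAt_of_isOpen hU (by norm_num) hx
  have hD k (hk : k < 3) x (hx : x ∈ U) :=
    hω.hasDerivAt_iteratedDeriv hU (k := k) (by exact_mod_cast hk) hx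
  have hu := eqOn_iteratedDeriv_succ_of_eqOn_rpow_mul hU
    (eqOn_iteratedDeriv_two_rpow a hU (hω.of_le (by norm_num)) hne) hne hD₀
    (fun x hx => ((((hD 1 (by norm_num) x hx).pow 2).const_mul (a - 1)).add
      ((hD₀ x hx).mul (hD 2 (by norm_num) x hx))).const_mul a)
  intro x hx
  rw [hu hx]
  norm_num
  ring_nf

theorem eqOn_iteratedDeriv_four_rpow (hU : IsOpen U) (hω : ContDiffOn ℝ 4 ω U)
    (hne : ∀ x ∈ U, ω x ≠ 0) :
    EqOn (iteratedDeriv 4 (fun s => ω s ^ a))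
      (fun x => ω x ^ (a - 4) * (a * ((ω x) ^ 3 * iteratedDeriv 4 ω x
        + 4 * (a - 1) * (ω x) ^ 2 * iteratedDeriv 1 ω x * iteratedDeriv 3 ω x
        + 3 * (a - 1) * (ω x) ^ 2 * (iteratedDeriv 2 ω x) ^ 2
        + 6 * (a - 1) * (a - 2) * ω x * (iteratedDeriv 1 ω x) ^ 2 * iteratedDeriv 2 ω x
        + (a - 1) * (a - 2) * (a - 3) * (iteratedDeriv 1 ω x) ^ 4))) U := by
  have hD₀ x (hx : x ∈ U) := hω.hasDerivAt_of_isOpen hU (by norm_num) hx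
  have hD k (hk : k < 4) x (hx : x ∈ U) :=
    hω.hasDerivAt_iteratedDeriv hU (k := k) (by exact_mod_cast hk) hx
  have hu := eqOn_iteratedDeriv_succ_of_eqOn_rpow_mul hU
    (eqOn_iteratedDeriv_three_rpow a hU (hω.of_le (by norm_num)) hne) hne hD₀
    (fun x hx => (((((hD 1 (by norm_num) x hx).pow 3).const_mul ((a - 1) * (a - 2))).add
      ((((hD₀ x hx).const_mul (3 * (a - 1))).mul (hD 1 (by norm_num) x hx)).mul
        (hD 2 (by norm_num) x hx))).add
      (((hD₀ x hx).pow 2).mul (hD 3 (by norm_num) x hx))).const_mul a)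
  intro x hx
  rw [hu hx]
  norm_num
  ring_nf

end RpowDerivatives

theorem riccati_hierarchy_linearization_general
    (a : ℝ) (I : Set ℝ) (hI : IsOpen I)
    (ω : ℝ → ℝ) (hpos : ∀ x ∈ I, 0 < ω x) (hω : ContDiffOn ℝ 4 ω I)
    (heq : ∀ x ∈ I,
      (ω x) ^ 3 * iteratedDeriv 4 ω x
        + 4 * (a - 1) * (ω x) ^ 2 * deriv ω x * iteratedDeriv 3 ω x
        + 3 * (a - 1) * (ω x) ^ 2 * (iteratedDeriv 2 ω x) ^ 2
        + 6 * (a - 1) * (a - 2) * ω x * (deriv ω x) ^ 2 * iteratedDeriv 2 ω x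
        + (a - 1) * (a - 2) * (a - 3) * (deriv ω x) ^ 4 = 0) :
    ∀ x ∈ I, iteratedDeriv 4 (fun s => ω s ^ a) x = 0 := by
  intro x hx
  rw [eqOn_iteratedDeriv_four_rpow a hI hω (fun y hy => (hpos y hy).ne') hx]
  simp only [iteratedDeriv_one]
  rw [heq x hx, mul_zero, mul_zero]

/-- the transformation `t = x`, `u = ω^a` maps solutions of the image of the
third-order Riccati-hierarchy equation under the Riccati substitution to solutions of
`u'''' = 0`. -/
theorem riccati_hierarchy_linearization
    (a : ℝ) (I : Set ℝ) (hI : IsOpen I) (hIc : I.OrdConnected)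
    (ω : ℝ → ℝ) (hpos : ∀ x ∈ I, 0 < ω x) (hω : ContDiffOn ℝ 4 ω I)
    (heq : ∀ x ∈ I,
      (ω x) ^ 3 * iteratedDeriv 4 ω x
        + 4 * (a - 1) * (ω x) ^ 2 * deriv ω x * iteratedDeriv 3 ω x
        + 3 * (a - 1) * (ω x) ^ 2 * (iteratedDeriv 2 ω x) ^ 2
        + 6 * (a - 1) * (a - 2) * ω x * (deriv ω x) ^ 2 * iteratedDeriv 2 ω x
        + (a - 1) * (a - 2) * (a - 3) * (deriv ω x) ^ 4 = 0) :
    ∀ x ∈ I, iteratedDeriv 4 (fun s => ω s ^ a) x = 0 :=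
  riccati_hierarchy_linearization_general a I hI ω hpos hω heq
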